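/- arXiv:0707.4360 — 3 statements merged into one kernel-verified Lean document; each statement's English description precedes it below -/
import Mathlib

section
/- For every f ∈ K(C), there exists w such that (f, w) is a point of the polytope Q. (That is, the projection of Q onto the f-coordinates contains the codeword polytope K(C).) -/
open Finset

/-- The tuple of sets `X_j(c)`: for each symbol `α`, the set of positions `i` in the
support of the `j`-th row of `H` where `c i = α`. -/
def Xj {R : Type} [Ring R] [DecidableEq R] {n m : ℕ} (H : Fin m → Fin n → R) (j : Fin m)
    (c : Fin n → R) : R → Finset (Fin n) :=
  fun α => univ.filter (fun i => H j i ≠ 0 ∧ c i = α)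

/-- The set `E_j` of all tuples `X_j(c)` arising from words `c` satisfying parity check `j`. -/
def Ej {R : Type} [Ring R] [Fintype R] [DecidableEq R] {n m : ℕ} (H : Fin m → Fin n → R)
    (j : Fin m) : Finset (R → Finset (Fin n)) :=
  (univ.filter (fun c : Fin n → R => ∑ i, H j i * c i = 0)).image (Xj H j)

/-- Membership in the relaxed LP polytope `Q`. -/
def MemQ {R : Type} [Ring R] [Fintype R] [DecidableEq R] {n m : ℕ} (H : Fin m → Fin n → R)
    (f : Fin n → R → ℝ) (w : Fin m → (R → Finset (Fin n)) → ℝ) : Prop :=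
  (∀ j : Fin m, ∀ S ∈ Ej H j, 0 ≤ w j S ∧ w j S ≤ 1) ∧
  (∀ j : Fin m, ∑ S ∈ Ej H j, w j S = 1) ∧
  (∀ j : Fin m, ∀ i : Fin n, H j i ≠ 0 → ∀ α : R, α ≠ 0 →
    f i α = ∑ S ∈ (Ej H j).filter (fun S => i ∈ S α), w j S)

/-- LP pseudocodeword: nonnegative integer vectors `(h, z)` satisfying the defining equations. -/
def IsLPPseudocodeword {R : Type} [Ring R] [Fintype R] [DecidableEq R] {n m : ℕ}
    (H : Fin m → Fin n → R) (h : Fin n → R → ℤ)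
    (z : Fin m → (R → Finset (Fin n)) → ℤ) : Prop :=
  (∀ i α, 0 ≤ h i α) ∧
  (∀ j : Fin m, ∀ S ∈ Ej H j, 0 ≤ z j S) ∧
  (∀ j : Fin m, ∀ i : Fin n, H j i ≠ 0 →
    (∀ α : R, α ≠ 0 → h i α = ∑ S ∈ (Ej H j).filter (fun S => i ∈ S α), z j S) ∧
    h i 0 = ∑ S ∈ (Ej H j).filter (fun S => ∀ α : R, α ≠ 0 → i ∉ S α), z j S)

/-- The embedding of a word `c ∈ Rⁿ` as the point `(ξ(c₁) | … | ξ(c_n))`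
(indicator coordinates for the nonzero symbols). -/
def xiEmb {R : Type} [Zero R] [DecidableEq R] {n : ℕ} (c : Fin n → R) : Fin n → R → ℝ :=
  fun i α => if α ≠ 0 ∧ c i = α then 1 else 0

/-- The linear cost function `λ · fᵀ = ∑_i ∑_{α ∈ R⁻} λ_i^{(α)} f_i^{(α)}`. -/
def costQ {R : Type} [Zero R] [Fintype R] [DecidableEq R] {n : ℕ}
    (lam f : Fin n → R → ℝ) : ℝ :=
  ∑ i, ∑ α ∈ univ.filter (fun α : R => α ≠ 0), lam i α * f i α

/-- Connectedness of the Tanner graph of `H`: the bipartite graph on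
`{u_1,…,u_n} ∪ {v_1,…,v_m}` with `u_i ~ v_j` iff `H j i ≠ 0`. -/
def TannerConnected {R : Type} [Zero R] {n m : ℕ} (H : Fin m → Fin n → R) : Prop :=
  (SimpleGraph.fromRel (fun x y : Fin n ⊕ Fin m =>
      ∃ i j, x = Sum.inl i ∧ y = Sum.inr j ∧ H j i ≠ 0)).Connected

/-- Graph-cover pseudocodeword for the `M`-cover specified by permutations `σ`. -/
def IsGCPseudocodeword {R : Type} [Ring R] [DecidableEq R] {n m : ℕ}
    (H : Fin m → Fin n → R) (M : ℕ) (σ : Fin m → Fin n → Equiv.Perm (Fin M))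
    (p : Fin n → Fin M → R) : Prop :=
  ∀ (j : Fin m) (ℓ : Fin M),
    ∑ i ∈ univ.filter (fun i => H j i ≠ 0), H j i * p i (σ j i ℓ) = 0

/- The projection of `Q` onto the `f`-coordinates is convex, since the constraints of `Q` are
affine in `(f, w)`, and it contains every codeword `c`, witnessed by the point mass of each
`E_j` at `X_j(c)`; hence it contains the convex hull `K(C)`. -/

section PolytopeQ

variable {R : Type} [Ring R] [DecidableEq R] {n m : ℕ} (H : Fin m → Fin n → R)

theorem mem_Xj {j : Fin m} {c : Fin n → R} {i : Fin n} {α : R} :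
    i ∈ Xj H j c α ↔ H j i ≠ 0 ∧ c i = α := by
  simp [Xj]

variable [Fintype R]

theorem Xj_mem_Ej {j : Fin m} {c : Fin n → R} (hc : ∑ i, H j i * c i = 0) :
    Xj H j c ∈ Ej H j :=
  mem_image_of_mem _ (mem_filter.mpr ⟨mem_univ _, hc⟩)

theorem memQ_xiEmb {c : Fin n → R} (hc : ∀ j, ∑ i, H j i * c i = 0) :
    MemQ H (xiEmb c) (fun j S => if S = Xj H j c then 1 else 0) := by
  refine ⟨fun j S _ => by beta_reduce; split_ifs <;> norm_num, fun j => ?_, fun j i hji α hα => ?_⟩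
  · rw [sum_ite_eq' _ _ (fun _ => (1 : ℝ)), if_pos (Xj_mem_Ej H (hc j))]
  · rw [sum_ite_eq']
    simp [xiEmb, mem_Xj, Xj_mem_Ej H (hc j), hji, hα]

theorem MemQ.convex_combination {f f' : Fin n → R → ℝ} {w w' : Fin m → (R → Finset (Fin n)) → ℝ}
    (h : MemQ H f w) (h' : MemQ H f' w') {a b : ℝ} (ha : 0 ≤ a) (hb : 0 ≤ b) (hab : a + b = 1) :
    MemQ H (a • f + b • f') (a • w + b • w') := by
  obtain ⟨hbd, hsum, hf⟩ := h
  obtain ⟨hbd', hsum', hf'⟩ := h'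
  refine ⟨fun j S hS => ?_, fun j => ?_, fun j i hji α hα => ?_⟩
  · obtain ⟨h0, h1⟩ := hbd j S hS
    obtain ⟨h0', h1'⟩ := hbd' j S hS
    simp only [Pi.add_apply, Pi.smul_apply, smul_eq_mul]
    constructor <;> nlinarith
  · simp only [Pi.add_apply, Pi.smul_apply, smul_eq_mul, sum_add_distrib, ← mul_sum, hsum,
      hsum', hab, mul_one]
  · simp only [Pi.add_apply, Pi.smul_apply, smul_eq_mul, sum_add_distrib, ← mul_sum,
      hf j i hji α hα, hf' j i hji α hα]

theorem convex_setOf_exists_memQ : Convex ℝ {f : Fin n → R → ℝ | ∃ w, MemQ H f w} := by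
  rintro f ⟨w, hw⟩ f' ⟨w', hw'⟩ a b ha hb hab
  exact ⟨_, hw.convex_combination H hw' ha hb hab⟩

end PolytopeQ

/-- Every point `f` of the codeword polytope `K(C)` extends to a point
`(f, w)` of the polytope `Q`. -/
theorem stmt2 {R : Type} [Ring R] [Fintype R] [DecidableEq R] {n m : ℕ}
    (H : Fin m → Fin n → R) (f : Fin n → R → ℝ)
    (hf : f ∈ convexHull ℝ {g : Fin n → R → ℝ |
        ∃ c : Fin n → R, (∀ j : Fin m, ∑ i, H j i * c i = 0) ∧ g = xiEmb c}) :
    ∃ w : Fin m → (R → Finset (Fin n)) → ℝ, MemQ H f w := by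
  refine convexHull_min ?_ (convex_setOf_exists_memQ H) hf
  rintro _ ⟨c, hc, rfl⟩
  exact ⟨_, memQ_xiEmb H hc⟩
end

section
/- Let λ = (λ_i^{(α)})_{i∈{1,…,n}, α∈R⁻} be any real vector, and assume the Tanner graph of H is connected (the bipartite graph on vertex set {u_1,…,u_n} ∪ {v_1,…,v_m} with an edge between u_i and v_j iff H_{j,i} ≠ 0 is connected). Suppose there exists an LP pseudocodeword (h, z) with h_i(α) ≠ 0 for some i ∈ {1,…,n} and some α ∈ R⁻, such that ∑_{i=1}^n ∑_{α∈R⁻} λ_i^{(α)} h_i(α) < 0. Then there exists a point (f, w) of the polytope Q with f ≠ 0 and λ·fᵀ = ∑_{i=1}^n ∑_{α∈R⁻} λ_i^{(α)} f_i^{(α)} < 0; in particular, the minimum of the cost over Q is strictly less than 0, which is the cost of the all-zero codeword point, so the LP decoder fails when the all-zero codeword is transmitted. -/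
open Finset

/-!
For a check `j` and a position `i` in its support, each configuration `S = X_j(c) ∈ E_j`
puts `i` into exactly one class `S_α` (namely `α = c_i`), so the pseudocodeword equations
give `∑_{α ∈ R} h_i(α) = ∑_{S ∈ E_j} z_{j,S}`. Along the edges of the Tanner graph these
totals therefore agree, and connectedness makes them all equal to one integer `N`, which is
positive because `h` has a nonzero entry. Dividing `(h, z)` by `N` gives a point of `Q`
with a nonzero `f` and cost `N⁻¹ ∑ λ_i^{(α)} h_i(α) < 0`.
-/

section Tanner

variable {R : Type} [Ring R] [Fintype R] [DecidableEq R] {n m : ℕ}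

omit [Fintype R] in
lemma mem_Xj_iff (H : Fin m → Fin n → R) (j : Fin m) (c : Fin n → R) {i : Fin n}
    (hji : H j i ≠ 0) (α : R) : i ∈ Xj H j c α ↔ c i = α := by
  simp [Xj, hji]

lemma sum_sum_filter_mem_Ej {M : Type} [AddCommMonoid M] (H : Fin m → Fin n → R) (j : Fin m)
    {i : Fin n} (hji : H j i ≠ 0) (z : (R → Finset (Fin n)) → M) :
    ∑ α : R, ∑ S ∈ (Ej H j).filter (fun S => i ∈ S α), z S = ∑ S ∈ Ej H j, z S := by
  simp only [Finset.sum_filter]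
  rw [Finset.sum_comm]
  refine Finset.sum_congr rfl fun S hS => ?_
  obtain ⟨c, -, rfl⟩ := Finset.mem_image.1 hS
  simp only [mem_Xj_iff H j c hji, Finset.sum_ite_eq, Finset.mem_univ, if_true]

lemma filter_Ej_forall_not_mem (H : Fin m → Fin n → R) (j : Fin m) {i : Fin n}
    (hji : H j i ≠ 0) :
    (Ej H j).filter (fun S => ∀ α : R, α ≠ 0 → i ∉ S α)
      = (Ej H j).filter (fun S => i ∈ S 0) := by
  refine Finset.filter_congr fun S hS => ?_
  obtain ⟨c, -, rfl⟩ := Finset.mem_image.1 hS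
  simp only [mem_Xj_iff H j c hji]
  exact ⟨fun hall => by_contra fun hc0 => hall (c i) hc0 rfl,
    fun h0 α hα hc => hα (hc ▸ h0)⟩

lemma IsLPPseudocodeword.sum_eq_sum_Ej {H : Fin m → Fin n → R} {h : Fin n → R → ℤ}
    {z : Fin m → (R → Finset (Fin n)) → ℤ} (hpc : IsLPPseudocodeword H h z) {j : Fin m}
    {i : Fin n} (hji : H j i ≠ 0) : ∑ α : R, h i α = ∑ S ∈ Ej H j, z j S := by
  obtain ⟨hnonzero, hzero⟩ := hpc.2.2 j i hji
  rw [← sum_sum_filter_mem_Ej H j hji (z j), ← Finset.add_sum_erase _ _ (Finset.mem_univ 0),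
    ← Finset.add_sum_erase _ _ (Finset.mem_univ 0), hzero, filter_Ej_forall_not_mem H j hji]
  congr 1
  exact Finset.sum_congr rfl fun α hα => hnonzero α (Finset.ne_of_mem_erase hα)

omit [Ring R] [Fintype R] [DecidableEq R] in
lemma TannerConnected.elim_eq [Zero R] {H : Fin m → Fin n → R} (hconn : TannerConnected H)
    {β : Type} {a : Fin n → β} {b : Fin m → β} (hab : ∀ i j, H j i ≠ 0 → a i = b j)
    (x y : Fin n ⊕ Fin m) : Sum.elim a b x = Sum.elim a b y := by
  obtain ⟨p⟩ := hconn.preconnected x y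
  induction p with
  | nil => rfl
  | cons hadj _ ih =>
    refine Eq.trans ?_ ih
    rw [SimpleGraph.fromRel_adj] at hadj
    obtain ⟨-, ⟨i, j, rfl, rfl, hji⟩ | ⟨i, j, rfl, rfl, hji⟩⟩ := hadj
    · exact hab i j hji
    · exact (hab i j hji).symm

lemma IsLPPseudocodeword.memQ_div {H : Fin m → Fin n → R} {h : Fin n → R → ℤ}
    {z : Fin m → (R → Finset (Fin n)) → ℤ} (hpc : IsLPPseudocodeword H h z) {N : ℤ}
    (hN : 0 < N) (hz : ∀ j, ∑ S ∈ Ej H j, z j S = N) :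
    MemQ H (fun i α => (h i α : ℝ) / N) (fun j S => (z j S : ℝ) / N) := by
  have hNR : (0 : ℝ) < N := by exact_mod_cast hN
  refine ⟨fun j S hS => ⟨?_, ?_⟩, fun j => ?_, fun j i hji α hα => ?_⟩
  · exact div_nonneg (by exact_mod_cast hpc.2.1 j S hS) hNR.le
  · rw [div_le_one hNR, ← hz j]
    exact_mod_cast Finset.single_le_sum (fun S hS => hpc.2.1 j S hS) hS
  · rw [← Finset.sum_div, div_eq_one_iff_eq hNR.ne']
    exact_mod_cast hz j
  · change (h i α : ℝ) / N = _
    rw [← Finset.sum_div, (hpc.2.2 j i hji).1 α hα, Int.cast_sum]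

omit [Ring R] in
lemma costQ_div [Zero R] (lam f : Fin n → R → ℝ) (c : ℝ) :
    costQ lam (fun i α => f i α / c) = costQ lam f / c := by
  simp only [costQ, Finset.sum_div, mul_div_assoc]

end Tanner

/-- If the Tanner graph is connected and there is an LP pseudocodeword
`(h, z)` with `h` nonzero on `R⁻` and `∑_i ∑_{α∈R⁻} λ_i^{(α)} h_i(α) < 0`, then there
is a point `(f, w) ∈ Q` with `f ≠ 0` and cost `λ·fᵀ < 0` (so the LP decoder fails on
the all-zero codeword, whose point has cost `0`). -/
theorem stmt5 {R : Type} [Ring R] [Fintype R] [DecidableEq R] {n m : ℕ}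
    (H : Fin m → Fin n → R) (lam : Fin n → R → ℝ)
    (hconn : TannerConnected H)
    (h : Fin n → R → ℤ) (z : Fin m → (R → Finset (Fin n)) → ℤ)
    (hpc : IsLPPseudocodeword H h z)
    (hne : ∃ i : Fin n, ∃ α : R, α ≠ 0 ∧ h i α ≠ 0)
    (hcost : ∑ i, ∑ α ∈ univ.filter (fun α : R => α ≠ 0), lam i α * (h i α : ℝ) < 0) :
    ∃ (f : Fin n → R → ℝ) (w : Fin m → (R → Finset (Fin n)) → ℝ),
      MemQ H f w ∧ (∃ i : Fin n, ∃ α : R, α ≠ 0 ∧ f i α ≠ 0) ∧ costQ lam f < 0 := by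
  obtain ⟨i₀, α₀, hα₀, hi₀⟩ := hne
  set N : ℤ := ∑ α : R, h i₀ α
  have htotal : ∀ (x : Fin n ⊕ Fin m),
      Sum.elim (fun i => ∑ α : R, h i α) (fun j => ∑ S ∈ Ej H j, z j S) x = N :=
    fun x => hconn.elim_eq (fun _ _ hji => hpc.sum_eq_sum_Ej hji) x (Sum.inl i₀)
  have hN : 0 < N := (lt_of_le_of_ne (hpc.1 i₀ α₀) hi₀.symm).trans_le
    (Finset.single_le_sum (fun α _ => hpc.1 i₀ α) (Finset.mem_univ α₀))
  have hNR : (0 : ℝ) < N := by exact_mod_cast hN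
  refine ⟨_, _, hpc.memQ_div hN fun j => htotal (Sum.inr j),
    ⟨i₀, α₀, hα₀, div_ne_zero (by exact_mod_cast hi₀) hNR.ne'⟩, ?_⟩
  rw [costQ_div]
  exact div_neg_of_neg_of_pos hcost hNR
end

section
/- Assume n ≥ 1, m ≥ 1, and the Tanner graph of H is connected (the bipartite graph on vertex set {u_1,…,u_n} ∪ {v_1,…,v_m} with an edge between u_i and v_j iff H_{j,i} ≠ 0 is connected). Let (h, z) be an LP pseudocodeword, and let M = ∑_{α∈R} h_1(α) (this sum is independent of the coordinate index by connectedness). Then there exist permutations σ_{j,i} of {1,…,M} (one for each pair (j,i) with H_{j,i} ≠ 0) and a graph-cover pseudocodeword p for the corresponding M-cover whose matrix representation equals h, i.e. m_i(α) = h_i(α) for all i ∈ {1,…,n} and α ∈ R. -/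
open Finset

lemma exists_fiber_counts {β : Type} [Fintype β] [DecidableEq β] {M : ℕ}
    (w : β → ℕ) (hw : ∑ b, w b = M) :
    ∃ f : Fin M → β, ∀ b, (univ.filter (fun ℓ => f ℓ = b)).card = w b := by
  have hcard : Fintype.card (Σ b : β, Fin (w b)) = M := by
    simp [hw]
  let e := Fintype.equivFinOfCardEq hcard
  refine ⟨fun ℓ => (e.symm ℓ).1, fun b => ?_⟩
  have h1 : (univ.filter (fun ℓ : Fin M => (e.symm ℓ).1 = b)).card
      = (univ.filter (fun x : Σ b : β, Fin (w b) => x.1 = b)).card := by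
    refine Finset.card_bij (fun ℓ _ => e.symm ℓ) ?_ ?_ ?_
    · intro a ha; simpa using (Finset.mem_filter.mp ha).2
    · intro a _ a' _ hh; exact e.symm.injective hh
    · intro x hx; exact ⟨e x, by simpa using (Finset.mem_filter.mp hx).2, by simp⟩
  have h2 : (univ.filter (fun x : Σ b' : β, Fin (w b') => x.1 = b))
      = univ.map ⟨Sigma.mk b, sigma_mk_injective⟩ := by
    ext ⟨b', t⟩
    simp only [mem_filter, mem_univ, true_and, mem_map, Function.Embedding.coeFn_mk]
    constructor
    · rintro rfl; exact ⟨t, rfl⟩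
    · rintro ⟨a, ha⟩; exact (congrArg Sigma.fst ha).symm
  rw [h1, h2, Finset.card_map, Finset.card_univ, Fintype.card_fin]

lemma exists_perm_comp {β : Type} [DecidableEq β] {M : ℕ} (f g : Fin M → β)
    (hc : ∀ b, (univ.filter (fun ℓ => f ℓ = b)).card = (univ.filter (fun ℓ => g ℓ = b)).card) :
    ∃ τ : Equiv.Perm (Fin M), ∀ ℓ, f (τ ℓ) = g ℓ := by
  have e : ∀ b, {ℓ // g ℓ = b} ≃ {ℓ // f ℓ = b} := fun b =>
    Fintype.equivOfCardEq (by rw [Fintype.card_subtype, Fintype.card_subtype, hc])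
  refine ⟨((Equiv.sigmaFiberEquiv g).symm.trans (Equiv.sigmaCongrRight e)).trans
      (Equiv.sigmaFiberEquiv f), fun ℓ => ?_⟩
  exact (e (g ℓ) ⟨ℓ, rfl⟩).2

lemma Ej_struct {R : Type} [Ring R] [Fintype R] [DecidableEq R] {n m : ℕ}
    (H : Fin m → Fin n → R) (j : Fin m) {S : R → Finset (Fin n)} (hS : S ∈ Ej H j)
    {i : Fin n} (hi : H j i ≠ 0) : ∃ v : R, ∀ α, i ∈ S α ↔ v = α := by
  obtain ⟨c, _, rfl⟩ := Finset.mem_image.mp hS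
  exact ⟨c i, fun α => by simp [Xj, hi]⟩

lemma key_h {R : Type} [Ring R] [Fintype R] [DecidableEq R] {n m : ℕ}
    {H : Fin m → Fin n → R} {h : Fin n → R → ℤ} {z : Fin m → (R → Finset (Fin n)) → ℤ}
    (hpc : IsLPPseudocodeword H h z) (j : Fin m) (i : Fin n) (hi : H j i ≠ 0) (α : R) :
    h i α = ∑ S ∈ (Ej H j).filter (fun S => i ∈ S α), z j S := by
  by_cases hα : α = 0
  · subst hα
    rw [(hpc.2.2 j i hi).2]
    apply Finset.sum_congr _ (fun _ _ => rfl)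
    apply Finset.filter_congr
    intro S hS
    obtain ⟨v, hv⟩ := Ej_struct H j hS hi
    simp only [hv]
    constructor
    · intro hp
      by_contra h0
      exact hp v h0 rfl
    · rintro rfl β hβ hvb; exact hβ hvb.symm
  · exact (hpc.2.2 j i hi).1 α hα

lemma edge_sum {R : Type} [Ring R] [Fintype R] [DecidableEq R] {n m : ℕ}
    {H : Fin m → Fin n → R} {h : Fin n → R → ℤ} {z : Fin m → (R → Finset (Fin n)) → ℤ}
    (hpc : IsLPPseudocodeword H h z) (j : Fin m) (i : Fin n) (hi : H j i ≠ 0) :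
    ∑ α : R, h i α = ∑ S ∈ Ej H j, z j S := by
  have : ∀ α : R, h i α = ∑ S ∈ Ej H j, if i ∈ S α then z j S else 0 := by
    intro α; rw [key_h hpc j i hi α, Finset.sum_filter]
  rw [Finset.sum_congr rfl (fun α _ => this α), Finset.sum_comm]
  refine Finset.sum_congr rfl (fun S hS => ?_)
  obtain ⟨v, hv⟩ := Ej_struct H j hS hi
  simp only [hv]
  simp

lemma walk_const {V : Type} {G : SimpleGraph V} (F : V → ℤ)
    (hadj : ∀ x y, G.Adj x y → F x = F y) {a b : V} (w : G.Walk a b) : F a = F b := by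
  induction w with
  | nil => rfl
  | cons ha _ ih => exact (hadj _ _ ha).trans ih

/-- from an LP pseudocodeword `(h, z)` (Tanner graph connected) with
`M = ∑_{α∈R} h_1(α)` one obtains an `M`-cover (given by permutations `σ`) and a
graph-cover pseudocodeword `p` whose matrix representation equals `h`. -/
theorem stmt6 {R : Type} [Ring R] [Fintype R] [DecidableEq R] {n m : ℕ}
    (hn : 0 < n) (hm : 0 < m)
    (H : Fin m → Fin n → R) (hconn : TannerConnected H)
    (h : Fin n → R → ℤ) (z : Fin m → (R → Finset (Fin n)) → ℤ)
    (hpc : IsLPPseudocodeword H h z)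
    (M : ℕ) (hM : (M : ℤ) = ∑ α : R, h ⟨0, hn⟩ α) :
    ∃ (σ : Fin m → Fin n → Equiv.Perm (Fin M)) (p : Fin n → Fin M → R),
      IsGCPseudocodeword H M σ p ∧
      ∀ (i : Fin n) (α : R),
        (((univ.filter (fun ℓ : Fin M => p i ℓ = α)).card : ℤ) = h i α) := by

  classical
  obtain ⟨hpos, hznn, -⟩ := id hpc
  set F : Fin n ⊕ Fin m → ℤ :=
    Sum.elim (fun i => ∑ α : R, h i α) (fun j => ∑ S ∈ Ej H j, z j S) with hFdef
  have hadj : ∀ x y, (SimpleGraph.fromRel (fun x y : Fin n ⊕ Fin m =>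
      ∃ i j, x = Sum.inl i ∧ y = Sum.inr j ∧ H j i ≠ 0)).Adj x y → F x = F y := by
    intro x y hxy
    rw [SimpleGraph.fromRel_adj] at hxy
    obtain ⟨-, h1 | h1⟩ := hxy
    · obtain ⟨i, j, rfl, rfl, hij⟩ := h1
      exact edge_sum hpc j i hij
    · obtain ⟨i, j, rfl, rfl, hij⟩ := h1
      exact (edge_sum hpc j i hij).symm
  have hFconst : ∀ x, F x = (M : ℤ) := by
    intro x
    obtain ⟨w⟩ := hconn.preconnected x (Sum.inl ⟨0, hn⟩)
    rw [walk_const F hadj w]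
    exact hM.symm
  have hrow : ∀ i, ∑ α : R, h i α = (M : ℤ) := fun i => hFconst (Sum.inl i)
  have hchk : ∀ j, ∑ S ∈ Ej H j, z j S = (M : ℤ) := fun j => hFconst (Sum.inr j)
  -- natural-number weight functions
  have hζ : ∀ j, ∑ S : (R → Finset (Fin n)),
      (if S ∈ Ej H j then (z j S).toNat else 0) = M := by
    intro j
    have hcast : ((∑ S : (R → Finset (Fin n)),
        (if S ∈ Ej H j then (z j S).toNat else 0) : ℕ) : ℤ) = (M : ℤ) := by
      push_cast
      rw [Finset.sum_ite_mem, Finset.univ_inter, ← hchk j]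
      exact Finset.sum_congr rfl (fun S hS => Int.toNat_of_nonneg (hznn j S hS))
    exact_mod_cast hcast
  have hw : ∀ i, ∑ α : R, (h i α).toNat = M := by
    intro i
    have hcast : ((∑ α : R, (h i α).toNat : ℕ) : ℤ) = (M : ℤ) := by
      push_cast
      rw [← hrow i]
      exact Finset.sum_congr rfl (fun α _ => Int.toNat_of_nonneg (hpos i α))
    exact_mod_cast hcast
  choose ψ hψ using fun j => exists_fiber_counts _ (hζ j)
  choose p hp using fun i => exists_fiber_counts _ (hw i)
  have hψmem : ∀ j ℓ, ψ j ℓ ∈ Ej H j := by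
    intro j ℓ
    by_contra hmem
    have h0 : (univ.filter (fun ℓ' => ψ j ℓ' = ψ j ℓ)).card = 0 := by
      rw [hψ j (ψ j ℓ)]; simp [hmem]
    have hℓ : ℓ ∈ univ.filter (fun ℓ' => ψ j ℓ' = ψ j ℓ) := by simp
    rw [Finset.card_eq_zero] at h0
    rw [h0] at hℓ
    exact absurd hℓ (Finset.notMem_empty ℓ)
  have hex : ∀ j S, S ∈ Ej H j →
      ∃ c : Fin n → R, (∑ i, H j i * c i = 0) ∧ Xj H j c = S := by
    intro j S hS
    obtain ⟨c, hc, hXc⟩ := Finset.mem_image.mp hS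
    exact ⟨c, (Finset.mem_filter.mp hc).2, hXc⟩
  obtain ⟨cw, hcw0, hcwX⟩ : ∃ cw : Fin m → (R → Finset (Fin n)) → (Fin n → R),
      (∀ j S, S ∈ Ej H j → ∑ i, H j i * cw j S i = 0) ∧
      (∀ j S, S ∈ Ej H j → Xj H j (cw j S) = S) := by
    refine ⟨fun j S => if hS : S ∈ Ej H j then (hex j S hS).choose else 0,
      fun j S hS => ?_, fun j S hS => ?_⟩
    · simp only [dif_pos hS]; exact (hex j S hS).choose_spec.1
    · simp only [dif_pos hS]; exact (hex j S hS).choose_spec.2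
  have hcwval : ∀ j (i : Fin n), H j i ≠ 0 → ∀ S, S ∈ Ej H j →
      ∀ α, (cw j S i = α ↔ i ∈ S α) := by
    intro j i hij S hS α
    conv_rhs => rw [← hcwX j S hS]
    simp [Xj, hij]
  have hcount : ∀ j (i : Fin n), H j i ≠ 0 → ∀ α : R,
      (univ.filter (fun ℓ : Fin M => cw j (ψ j ℓ) i = α)).card = (h i α).toNat := by
    intro j i hij α
    rw [Finset.card_eq_sum_card_fiberwise
      (f := ψ j) (t := Ej H j) (fun ℓ _ => hψmem j ℓ)]
    have hterm : ∀ S ∈ Ej H j,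
        ((univ.filter (fun ℓ => cw j (ψ j ℓ) i = α)).filter (fun ℓ => ψ j ℓ = S)).card
        = if i ∈ S α then (z j S).toNat else 0 := by
      intro S hS
      rw [Finset.filter_filter]
      by_cases hc : cw j S i = α
      · rw [if_pos ((hcwval j i hij S hS α).mp hc)]
        have hset : (univ.filter (fun ℓ : Fin M => cw j (ψ j ℓ) i = α ∧ ψ j ℓ = S))
            = univ.filter (fun ℓ => ψ j ℓ = S) := by
          ext ℓ
          simp only [mem_filter, mem_univ, true_and]
          constructor
          · exact And.right
          · intro hℓ; exact ⟨by rw [hℓ, hc], hℓ⟩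
        rw [hset, hψ j S, if_pos hS]
      · rw [if_neg (fun hmem => hc ((hcwval j i hij S hS α).mpr hmem))]
        rw [Finset.card_eq_zero, Finset.filter_eq_empty_iff]
        rintro ℓ -
        rintro ⟨h1, h2⟩
        rw [h2] at h1
        exact hc h1
    rw [Finset.sum_congr rfl hterm]
    have hcast : ((∑ S ∈ Ej H j, if i ∈ S α then (z j S).toNat else 0 : ℕ) : ℤ)
        = h i α := by
      push_cast
      rw [key_h hpc j i hij α, Finset.sum_filter]
      refine Finset.sum_congr rfl (fun S hS => ?_)
      by_cases hmem : i ∈ S α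
      · rw [if_pos hmem, if_pos hmem, Int.toNat_of_nonneg (hznn j S hS)]
      · rw [if_neg hmem, if_neg hmem]
    rw [← Int.toNat_of_nonneg (hpos i α)] at hcast
    exact_mod_cast hcast
  have hσex : ∀ j (i : Fin n), H j i ≠ 0 →
      ∃ τ : Equiv.Perm (Fin M), ∀ ℓ, p i (τ ℓ) = cw j (ψ j ℓ) i := by
    intro j i hij
    apply exists_perm_comp
    intro b
    rw [hp i b, hcount j i hij b]
  have hσex' : ∀ j (i : Fin n), ∃ τ : Equiv.Perm (Fin M),
      H j i ≠ 0 → ∀ ℓ, p i (τ ℓ) = cw j (ψ j ℓ) i := by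
    intro j i
    by_cases hij : H j i ≠ 0
    · exact ⟨(hσex j i hij).choose, fun _ => (hσex j i hij).choose_spec⟩
    · exact ⟨1, fun hij' => absurd hij' hij⟩
  choose σ hσ using hσex'
  refine ⟨σ, p, ?_, ?_⟩
  · intro j ℓ
    have h1 : ∑ i ∈ univ.filter (fun i => H j i ≠ 0), H j i * p i (σ j i ℓ)
        = ∑ i ∈ univ.filter (fun i => H j i ≠ 0), H j i * cw j (ψ j ℓ) i := by
      refine Finset.sum_congr rfl (fun i hi => ?_)
      rw [hσ j i (by simpa using hi) ℓ]
    rw [h1, Finset.sum_filter_of_ne (fun i _ hne => left_ne_zero_of_mul hne)]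
    exact hcw0 j (ψ j ℓ) (hψmem j ℓ)
  · intro i α
    rw [hp i α, Int.toNat_of_nonneg (hpos i α)]
end
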